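/- The product F(x) = ∏_{i<j} (x_j - x_i)^{2/κ} over all pairs 1 ≤ i < j ≤ 2N, defined on x₁ < x₂ < ... < x_{2N}, satisfies each of the 2N null-state PDEs: for each j, (κ/4)∂_j²F + ∑_{k≠j}[∂_k F/(x_k - x_j) - ((6-κ)/(2κ))F/(x_k-x_j)²] = 0. -/

import Mathlib

open Finset

/-- The product F(x) = ∏_{i<j} (x_j - x_i)^{2/κ} over all pairs of coordinates. -/
noncomputable def prodPow (κ : ℝ) (N : ℕ) (x : Fin (2 * N) → ℝ) : ℝ :=
  ∏ p ∈ Finset.univ.filter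
      (fun p : Fin (2 * N) × Fin (2 * N) => p.1 < p.2),
    (x p.2 - x p.1) ^ (2 / κ)

section Aux

variable {κ : ℝ} {N : ℕ}

/-- Decomposition of the product after updating coordinate `k`. -/
lemma prodPow_update_eq (x : Fin (2 * N) → ℝ) (k : Fin (2 * N)) (s : ℝ) :
    prodPow κ N (Function.update x k s) =
      (∏ p ∈ Finset.univ.filter
          (fun p : Fin (2 * N) × Fin (2 * N) => (p.1 < p.2) ∧ p.1 ≠ k ∧ p.2 ≠ k),
        (x p.2 - x p.1) ^ (2 / κ)) *
      ∏ i ∈ Finset.univ.erase k, (if i < k then s - x i else x i - s) ^ (2 / κ) := by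
  unfold prodPow
  rw [← Finset.prod_filter_mul_prod_filter_not
      (Finset.univ.filter (fun p : Fin (2 * N) × Fin (2 * N) => p.1 < p.2))
      (fun p => p.1 ≠ k ∧ p.2 ≠ k)]
  congr 1
  · rw [Finset.filter_filter]
    refine Finset.prod_congr rfl fun p hp => ?_
    simp only [Finset.mem_filter] at hp
    rw [Function.update_of_ne hp.2.2.2, Function.update_of_ne hp.2.2.1]
  · refine Finset.prod_nbij' (fun p => if p.1 = k then p.2 else p.1)
      (fun i => if i < k then (i, k) else (k, i)) ?_ ?_ ?_ ?_ ?_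
    · intro p hp
      simp only [Finset.mem_filter, Finset.mem_filter, Finset.mem_univ, true_and,
        not_and_or, not_ne_iff] at hp
      rcases hp.2 with h1 | h2
      · simp only [if_pos h1, Finset.mem_erase, Finset.mem_univ, and_true]
        exact ne_of_gt (h1 ▸ hp.1)
      · have hne : p.1 ≠ k := fun h => absurd (h ▸ h2 ▸ hp.1) (lt_irrefl _)
        simp only [if_neg hne, Finset.mem_erase, Finset.mem_univ, and_true]
        exact hne
    · intro i hi
      simp only [Finset.mem_erase, Finset.mem_univ, and_true] at hi
      by_cases h : i < k
      · simp only [if_pos h, Finset.mem_filter, Finset.mem_univ, true_and]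
        exact ⟨h, by simp [hi]⟩
      · have hk : k < i := lt_of_le_of_ne (not_lt.mp h) (Ne.symm hi)
        simp only [if_neg h, Finset.mem_filter, Finset.mem_univ, true_and]
        exact ⟨hk, by simp [hi]⟩
    · intro p hp
      simp only [Finset.mem_filter, Finset.mem_univ, true_and, not_and_or, not_ne_iff] at hp
      rcases hp.2 with h1 | h2
      · simp only [if_pos h1]
        have : ¬ p.2 < k := not_lt.mpr (le_of_lt (h1 ▸ hp.1))
        simp only [if_neg this]
        exact Prod.ext h1.symm rfl
      · have hne : p.1 ≠ k := fun h => absurd (h ▸ h2 ▸ hp.1) (lt_irrefl _)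
        simp only [if_neg hne]
        have : p.1 < k := h2 ▸ hp.1
        simp only [if_pos this]
        exact Prod.ext rfl h2.symm
    · intro i hi
      simp only [Finset.mem_erase, Finset.mem_univ, and_true] at hi
      by_cases h : i < k
      · simp only [if_pos h, if_neg hi]
      · simp [h, hi]
    · intro p hp
      simp only [Finset.mem_filter, Finset.mem_univ, true_and, not_and_or, not_ne_iff] at hp
      rcases hp.2 with h1 | h2
      · have h2k : k < p.2 := h1 ▸ hp.1
        simp only [if_pos h1, Function.update_of_ne (ne_of_gt h2k), not_lt.mpr h2k.le,
          if_false, if_neg (not_lt.mpr h2k.le)]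
        rw [h1, Function.update_self]
      · have h1k : p.1 < k := h2 ▸ hp.1
        simp only [if_neg (ne_of_lt h1k), if_pos h1k,
          Function.update_of_ne (ne_of_lt h1k)]
        rw [h2, Function.update_self]

end Aux

lemma hasDerivAt_prodPow_update (x : Fin (2 * N) → ℝ) (k : Fin (2 * N)) (s : ℝ)
    (hs : ∀ i : Fin (2 * N), (i < k → x i < s) ∧ (k < i → s < x i)) :
    HasDerivAt (fun t => prodPow κ N (Function.update x k t))
      (prodPow κ N (Function.update x k s) *
        ((2 / κ) * ∑ i ∈ Finset.univ.erase k, (s - x i)⁻¹)) s := by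
  classical
  set f : Fin (2 * N) → ℝ → ℝ :=
    fun i t => (if i < k then t - x i else x i - t) ^ (2 / κ) with hf
  set f' : Fin (2 * N) → ℝ := fun i => f i s * ((2 / κ) * (s - x i)⁻¹) with hf'
  have key : ∀ i ∈ Finset.univ.erase k, HasDerivAt (f i) (f' i) s := by
    intro i hi
    simp only [Finset.mem_erase, Finset.mem_univ, and_true] at hi
    by_cases h : i < k
    · have hpos : 0 < s - x i := sub_pos.mpr ((hs i).1 h)
      have h1 := ((hasDerivAt_id s).sub_const (x i)).rpow_const
        (p := 2 / κ) (Or.inl hpos.ne')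
      simp only [hf, hf', if_pos h]
      refine h1.congr_deriv ?_
      simp only [id_eq]
      rw [Real.rpow_sub_one hpos.ne']
      field_simp
    · have hk : k < i := lt_of_le_of_ne (not_lt.mp h) (Ne.symm hi)
      have hpos : 0 < x i - s := sub_pos.mpr ((hs i).2 hk)
      have h1 := ((hasDerivAt_const s (x i)).sub (hasDerivAt_id s)).rpow_const
        (p := 2 / κ) (Or.inl hpos.ne')
      simp only [hf, hf', if_neg h]
      refine h1.congr_deriv ?_
      simp only [Pi.sub_apply, id_eq]
      rw [Real.rpow_sub_one hpos.ne']
      rw [show (s - x i)⁻¹ = -(x i - s)⁻¹ by rw [← inv_neg, neg_sub]]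
      field_simp
      ring
  have hprod := HasDerivAt.fun_finsetProd key
  have hsum : ∑ i ∈ Finset.univ.erase k,
        (∏ j ∈ (Finset.univ.erase k).erase i, f j s) • f' i
      = (∏ i ∈ Finset.univ.erase k, f i s) *
          ((2 / κ) * ∑ i ∈ Finset.univ.erase k, (s - x i)⁻¹) := by
    rw [Finset.mul_sum, Finset.mul_sum]
    refine Finset.sum_congr rfl fun i hi => ?_
    rw [smul_eq_mul, hf', ← mul_assoc, Finset.prod_erase_mul _ _ hi]
  rw [hsum] at hprod
  have hC := hprod.const_mul (∏ p ∈ Finset.univ.filter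
      (fun p : Fin (2 * N) × Fin (2 * N) => (p.1 < p.2) ∧ p.1 ≠ k ∧ p.2 ≠ k),
    (x p.2 - x p.1) ^ (2 / κ))
  have hfun : (fun t => prodPow κ N (Function.update x k t)) =
      fun t => (∏ p ∈ Finset.univ.filter
          (fun p : Fin (2 * N) × Fin (2 * N) => (p.1 < p.2) ∧ p.1 ≠ k ∧ p.2 ≠ k),
        (x p.2 - x p.1) ^ (2 / κ)) * ∏ i ∈ Finset.univ.erase k, f i t :=
    funext fun t => prodPow_update_eq x k t
  rw [hfun, prodPow_update_eq x k s]
  refine hC.congr_deriv ?_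
  ring

lemma deriv_prodPow_update (x : Fin (2 * N) → ℝ) (hx : StrictMono x) (k : Fin (2 * N)) :
    deriv (fun t => prodPow κ N (Function.update x k t)) (x k)
      = prodPow κ N x * ((2 / κ) * ∑ i ∈ Finset.univ.erase k, (x k - x i)⁻¹) := by
  have h := (hasDerivAt_prodPow_update (κ := κ) x k (x k)
    (fun i => ⟨fun h => hx h, fun h => hx h⟩)).deriv
  rwa [Function.update_eq_self] at h

lemma deriv2_prodPow_update (x : Fin (2 * N) → ℝ) (hx : StrictMono x) (j : Fin (2 * N)) :
    deriv (deriv (fun t => prodPow κ N (Function.update x j t))) (x j)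
      = prodPow κ N x * ((2 / κ) * ∑ i ∈ Finset.univ.erase j, (x j - x i)⁻¹)
          * ((2 / κ) * ∑ i ∈ Finset.univ.erase j, (x j - x i)⁻¹)
        + prodPow κ N x *
            ((2 / κ) * ∑ i ∈ Finset.univ.erase j, (-1 / (x j - x i) ^ 2)) := by
  have hev : ∀ᶠ s in nhds (x j),
      ∀ i : Fin (2 * N), (i < j → x i < s) ∧ (j < i → s < x i) := by
    rw [Filter.eventually_all]
    intro i
    rcases lt_trichotomy i j with h | h | h
    · filter_upwards [eventually_gt_nhds (hx h)] with s hs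
      exact ⟨fun _ => hs, fun hj => (asymm h hj).elim⟩
    · subst h
      exact Filter.Eventually.of_forall fun s =>
        ⟨fun h => (lt_irrefl _ h).elim, fun h => (lt_irrefl _ h).elim⟩
    · filter_upwards [eventually_lt_nhds (hx h)] with s hs
      exact ⟨fun hj => (asymm h hj).elim, fun _ => hs⟩
  have heq : deriv (fun t => prodPow κ N (Function.update x j t))
      =ᶠ[nhds (x j)] fun s => prodPow κ N (Function.update x j s) *
        ((2 / κ) * ∑ i ∈ Finset.univ.erase j, (s - x i)⁻¹) :=
    hev.mono fun s hs => (hasDerivAt_prodPow_update x j s hs).deriv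
  rw [heq.deriv_eq]
  have hg : HasDerivAt (fun t => prodPow κ N (Function.update x j t))
      (prodPow κ N x * ((2 / κ) * ∑ i ∈ Finset.univ.erase j, (x j - x i)⁻¹)) (x j) := by
    have h := hasDerivAt_prodPow_update (κ := κ) x j (x j)
      (fun i => ⟨fun h => hx h, fun h => hx h⟩)
    rwa [Function.update_eq_self] at h
  have hSig : HasDerivAt (fun s => (2 / κ) * ∑ i ∈ Finset.univ.erase j, (s - x i)⁻¹)
      ((2 / κ) * ∑ i ∈ Finset.univ.erase j, (-1 / (x j - x i) ^ 2)) (x j) := by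
    refine HasDerivAt.const_mul _ (HasDerivAt.fun_sum fun i hi => ?_)
    have hij : i ≠ j := (Finset.mem_erase.mp hi).1
    have hne : x j - x i ≠ 0 := sub_ne_zero.mpr (hx.injective.ne hij.symm)
    have h1 := ((hasDerivAt_id (x j)).sub_const (x i)).inv hne
    exact h1.congr_deriv rfl
  have hmul := hg.fun_mul hSig
  rw [hmul.deriv]
  rw [Function.update_eq_self]

lemma double_sum_eq (x : Fin (2 * N) → ℝ) (j : Fin (2 * N))
    (g : Fin (2 * N) → Fin (2 * N) → ℝ) :
    ∑ k ∈ Finset.univ.erase j, ∑ i ∈ (Finset.univ.erase j).erase k, g k i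
      = ∑ p ∈ ((Finset.univ.erase j) ×ˢ (Finset.univ.erase j)).filter
          (fun p => p.2 ≠ p.1), g p.1 p.2 := by
  rw [Finset.sum_filter, Finset.sum_product]
  refine Finset.sum_congr rfl fun k hk => ?_
  rw [← Finset.sum_filter, Finset.filter_ne']

lemma key_identity (hκ : κ ≠ 0) (x : Fin (2 * N) → ℝ) (hinj : Function.Injective x)
    (j : Fin (2 * N)) :
    (κ / 4) * (((2 / κ) * ∑ i ∈ Finset.univ.erase j, (x j - x i)⁻¹)
          * ((2 / κ) * ∑ i ∈ Finset.univ.erase j, (x j - x i)⁻¹)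
        + (2 / κ) * ∑ i ∈ Finset.univ.erase j, (-1 / (x j - x i) ^ 2))
      + ∑ k ∈ Finset.univ.erase j,
          (((2 / κ) * ∑ i ∈ Finset.univ.erase k, (x k - x i)⁻¹) / (x k - x j)
            - (6 - κ) / (2 * κ) / (x k - x j) ^ 2) = 0 := by
  classical
  have hne : ∀ a b : Fin (2 * N), a ≠ b → x a - x b ≠ 0 :=
    fun a b h => sub_ne_zero.mpr (hinj.ne h)
  -- e4 : sum of -1/(x j - x i)^2
  have e4 : ∑ i ∈ Finset.univ.erase j, (-1 / (x j - x i) ^ 2)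
      = -∑ i ∈ Finset.univ.erase j, ((x j - x i) ^ 2)⁻¹ := by
    rw [← Finset.sum_neg_distrib]
    exact Finset.sum_congr rfl fun i _ => by ring
  -- e1 : decomposition of the main sum
  have hsplit : ∀ k ∈ Finset.univ.erase j,
      (∑ i ∈ Finset.univ.erase k, (x k - x i)⁻¹)
        = (x k - x j)⁻¹ + ∑ i ∈ (Finset.univ.erase j).erase k, (x k - x i)⁻¹ := by
    intro k hk
    have hkj : k ≠ j := (Finset.mem_erase.mp hk).1
    have hj : j ∈ Finset.univ.erase k := by
      simp [Finset.mem_erase, hkj.symm]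
    rw [← Finset.add_sum_erase _ _ hj, Finset.erase_right_comm]
  have e1 : ∑ k ∈ Finset.univ.erase j,
        (((2 / κ) * ∑ i ∈ Finset.univ.erase k, (x k - x i)⁻¹) / (x k - x j)
          - (6 - κ) / (2 * κ) / (x k - x j) ^ 2)
      = (2 / κ) * ∑ k ∈ Finset.univ.erase j, ((x j - x k) ^ 2)⁻¹
        + (2 / κ) * ∑ k ∈ Finset.univ.erase j,
            ∑ i ∈ (Finset.univ.erase j).erase k, ((x k - x i)⁻¹ * (x k - x j)⁻¹)
        - (6 - κ) / (2 * κ) * ∑ k ∈ Finset.univ.erase j, ((x j - x k) ^ 2)⁻¹ := by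
    have step : ∀ k ∈ Finset.univ.erase j,
        ((2 / κ) * ∑ i ∈ Finset.univ.erase k, (x k - x i)⁻¹) / (x k - x j)
            - (6 - κ) / (2 * κ) / (x k - x j) ^ 2
          = ((2 / κ) * ((x j - x k) ^ 2)⁻¹
              + (2 / κ) * ∑ i ∈ (Finset.univ.erase j).erase k,
                  ((x k - x i)⁻¹ * (x k - x j)⁻¹))
            - (6 - κ) / (2 * κ) * ((x j - x k) ^ 2)⁻¹ := by
      intro k hk
      have hkj : k ≠ j := (Finset.mem_erase.mp hk).1
      have h0 : x k - x j ≠ 0 := hne k j hkj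
      have h0' : x j - x k ≠ 0 := hne j k hkj.symm
      rw [hsplit k hk, ← Finset.sum_mul]
      field_simp
      ring
    rw [Finset.sum_congr rfl step, Finset.sum_sub_distrib, Finset.sum_add_distrib,
      ← Finset.mul_sum, ← Finset.mul_sum, ← Finset.mul_sum]
  -- e2 : square of the sum
  have e2 : (∑ i ∈ Finset.univ.erase j, (x j - x i)⁻¹)
        * (∑ i ∈ Finset.univ.erase j, (x j - x i)⁻¹)
      = ∑ k ∈ Finset.univ.erase j, ((x j - x k) ^ 2)⁻¹
        + ∑ k ∈ Finset.univ.erase j,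
            ∑ i ∈ (Finset.univ.erase j).erase k, ((x j - x k)⁻¹ * (x j - x i)⁻¹) := by
    have inner : ∀ k ∈ Finset.univ.erase j,
        (x j - x k)⁻¹ * ∑ i ∈ Finset.univ.erase j, (x j - x i)⁻¹
          = ((x j - x k) ^ 2)⁻¹
            + ∑ i ∈ (Finset.univ.erase j).erase k, ((x j - x k)⁻¹ * (x j - x i)⁻¹) := by
      intro k hk
      rw [Finset.mul_sum, ← Finset.add_sum_erase _ _ hk, ← mul_inv, ← sq]
    rw [Finset.sum_mul, Finset.sum_congr rfl inner, Finset.sum_add_distrib]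
  -- e3 : the three-term cancellation
  have e3 : (∑ k ∈ Finset.univ.erase j,
          ∑ i ∈ (Finset.univ.erase j).erase k, ((x k - x i)⁻¹ * (x k - x j)⁻¹))
        + (∑ k ∈ Finset.univ.erase j,
          ∑ i ∈ (Finset.univ.erase j).erase k, ((x k - x i)⁻¹ * (x k - x j)⁻¹))
        + (∑ k ∈ Finset.univ.erase j,
          ∑ i ∈ (Finset.univ.erase j).erase k, ((x j - x k)⁻¹ * (x j - x i)⁻¹)) = 0 := by
    rw [double_sum_eq x j, double_sum_eq x j]
    have hswap : ∑ p ∈ ((Finset.univ.erase j) ×ˢ (Finset.univ.erase j)).filter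
          (fun p => p.2 ≠ p.1), ((x p.1 - x p.2)⁻¹ * (x p.1 - x j)⁻¹)
        = ∑ p ∈ ((Finset.univ.erase j) ×ˢ (Finset.univ.erase j)).filter
          (fun p => p.2 ≠ p.1), ((x p.2 - x p.1)⁻¹ * (x p.2 - x j)⁻¹) := by
      refine Finset.sum_nbij' Prod.swap Prod.swap ?_ ?_ ?_ ?_ ?_
      · intro p hp
        simp only [Finset.mem_filter, Finset.mem_product] at hp ⊢
        exact ⟨⟨hp.1.2, hp.1.1⟩, (hp.2).symm⟩
      · intro p hp
        simp only [Finset.mem_filter, Finset.mem_product] at hp ⊢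
        exact ⟨⟨hp.1.2, hp.1.1⟩, (hp.2).symm⟩
      · intro p _; rfl
      · intro p _; rfl
      · intro p _; rfl
    nth_rewrite 2 [hswap]
    rw [← Finset.sum_add_distrib, ← Finset.sum_add_distrib]
    refine Finset.sum_eq_zero fun p hp => ?_
    simp only [Finset.mem_filter, Finset.mem_product, Finset.mem_erase, Finset.mem_univ,
      and_true] at hp
    obtain ⟨⟨h1j, h2j⟩, h21⟩ := hp
    have hab : x p.1 - x p.2 ≠ 0 := hne _ _ (Ne.symm h21)
    have hba : x p.2 - x p.1 ≠ 0 := hne _ _ h21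
    have haj : x p.1 - x j ≠ 0 := hne _ _ h1j
    have hbj : x p.2 - x j ≠ 0 := hne _ _ h2j
    have hja : x j - x p.1 ≠ 0 := hne _ _ (Ne.symm h1j)
    have hjb : x j - x p.2 ≠ 0 := hne _ _ (Ne.symm h2j)
    field_simp
    ring
  linear_combination e1 + (1 / κ) * e2 + (1 / κ) * e3 + (1 / 2) * e4
    + ((1 / 2) * (∑ i ∈ Finset.univ.erase j, (-1 / (x j - x i) ^ 2))
        + (1 / 2) * (∑ k ∈ Finset.univ.erase j, ((x j - x k) ^ 2)⁻¹)
        + (1 / κ) * ((∑ i ∈ Finset.univ.erase j, (x j - x i)⁻¹)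
            * (∑ i ∈ Finset.univ.erase j, (x j - x i)⁻¹))) * (mul_inv_cancel₀ hκ)


/-- F(x) = ∏_{i<j}(x_j - x_i)^{2/κ}, on the chamber x₁ < ⋯ < x_{2N}, satisfies
each of the 2N null-state PDEs:
(κ/4)∂_j²F + ∑_{k≠j}[∂_kF/(x_k - x_j) - ((6-κ)/(2κ))F/(x_k-x_j)²] = 0. -/
theorem prodPow_satisfies_null_state (κ : ℝ) (hκ : 0 < κ) (N : ℕ) (hN : 1 ≤ N)
    (x : Fin (2 * N) → ℝ) (hx : StrictMono x) (j : Fin (2 * N)) :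
    (κ / 4) * deriv (deriv (fun s => prodPow κ N (Function.update x j s))) (x j)
      + ∑ k ∈ Finset.univ.filter (fun k : Fin (2 * N) => k ≠ j),
          (deriv (fun s => prodPow κ N (Function.update x k s)) (x k)
              / (x k - x j)
            - ((6 - κ) / (2 * κ)) * prodPow κ N x / (x k - x j) ^ 2) = 0 := by
  classical
  have hκ' : κ ≠ 0 := ne_of_gt hκ
  rw [Finset.filter_ne' Finset.univ j]
  rw [deriv2_prodPow_update (κ := κ) x hx j]
  have h1 : ∑ k ∈ Finset.univ.erase j,
        (deriv (fun s => prodPow κ N (Function.update x k s)) (x k) / (x k - x j)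
          - (6 - κ) / (2 * κ) * prodPow κ N x / (x k - x j) ^ 2)
      = prodPow κ N x * ∑ k ∈ Finset.univ.erase j,
          (((2 / κ) * ∑ i ∈ Finset.univ.erase k, (x k - x i)⁻¹) / (x k - x j)
            - (6 - κ) / (2 * κ) / (x k - x j) ^ 2) := by
    rw [Finset.mul_sum]
    refine Finset.sum_congr rfl fun k _ => ?_
    rw [deriv_prodPow_update (κ := κ) x hx k]
    ring
  rw [h1]
  linear_combination (prodPow κ N x) * key_identity hκ' x hx.injective j
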